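/- arXiv:1011.6612 — 4 statements merged into one kernel-verified Lean document; each statement's English description precedes it below -/
import Mathlib

section
/- Every 2-by-2 minor of the infinite matrix X(i,j) = C(j, i-j) is nonnegative: for i < i' and j < j', C(j, i-j)*C(j', i'-j') - C(j', i-j')*C(j, i'-j) ≥ 0. -/
/-!
Write `j' = j + s`, `i = j' + c` and `i' = i + t`. Unless `i < j'` (when the subtracted term
vanishes), the minor is `C(j, c+s) C(j+s, c+t) - C(j+s, c) C(j, c+s+t)`. Its nonnegativity says
that `n ↦ C(j, c+s+n) / C(j+s, c+n)` does not increase from `n = 0` to `n = t`, and this ratio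
decreases in each single step because
`C(j, m+s+1) / C(j, m+s) = (j-m-s)/(m+s+1) ≤ (j+s-m)/(m+1) = C(j+s, m+1) / C(j+s, m)`.
-/

/-- Binomial coefficient `C(n,k)` extended by `0` when `k < 0` or `k > n`. -/
def Cz (n k : ℤ) : ℤ := if 0 ≤ k ∧ k ≤ n then (n.toNat.choose k.toNat : ℤ) else 0

theorem cross_mul_le_of_forall_succ {R : Type*} [CommSemiring R] [LinearOrder R]
    [IsStrictOrderedRing R] {f g : ℕ → R} {t : ℕ}
    (hf : ∀ n ≤ t, 0 < f n) (hg : ∀ n ≤ t, 0 < g n)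
    (hstep : ∀ n, f (n + 1) * g n ≤ g (n + 1) * f n) :
    f t * g 0 ≤ g t * f 0 := by
  induction t with
  | zero => exact (mul_comm _ _).le
  | succ t ih =>
    have ih := ih (fun n hn => hf n (by omega)) (fun n hn => hg n (by omega))
    have hft := hf t (by omega)
    have hgt := hg t (by omega)
    refine le_of_mul_le_mul_right ?_ (mul_pos hft hgt)
    calc f (t + 1) * g 0 * (f t * g t) = (f t * g 0) * (f (t + 1) * g t) := by ring
      _ ≤ (g t * f 0) * (g (t + 1) * f t) :=
          mul_le_mul ih (hstep t) (mul_nonneg (hf _ le_rfl).le hgt.le)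
            (mul_nonneg hgt.le (hf 0 (Nat.zero_le _)).le)
      _ = g (t + 1) * f 0 * (f t * g t) := by ring

theorem Nat.choose_succ_mul_choose_le (j s m : ℕ) :
    j.choose (s + m + 1) * (j + s).choose m ≤ (j + s).choose (m + 1) * j.choose (s + m) := by
  have hfactor : (j - (s + m)) * (m + 1) ≤ (j + s - m) * (s + m + 1) :=
    Nat.mul_le_mul (by omega) (by omega)
  refine Nat.le_of_mul_le_mul_right (c := (s + m + 1) * (m + 1)) ?_ (by positivity)
  calc j.choose (s + m + 1) * (j + s).choose m * ((s + m + 1) * (m + 1))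
      = j.choose (s + m + 1) * (s + m + 1) * (j + s).choose m * (m + 1) := by ring
    _ = j.choose (s + m) * (j + s).choose m * ((j - (s + m)) * (m + 1)) := by
        rw [Nat.choose_succ_right_eq]; ring
    _ ≤ j.choose (s + m) * (j + s).choose m * ((j + s - m) * (s + m + 1)) :=
        Nat.mul_le_mul_left _ hfactor
    _ = (j + s).choose (m + 1) * (m + 1) * j.choose (s + m) * (s + m + 1) := by
        rw [Nat.choose_succ_right_eq]; ring
    _ = (j + s).choose (m + 1) * j.choose (s + m) * ((s + m + 1) * (m + 1)) := by ring

theorem Nat.choose_mul_choose_le (j s c t : ℕ) :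
    (j + s).choose c * j.choose (s + (c + t)) ≤ j.choose (s + c) * (j + s).choose (c + t) := by
  by_cases h : s + (c + t) ≤ j
  · have := cross_mul_le_of_forall_succ (f := fun n => j.choose (s + (c + n)))
      (g := fun n => (j + s).choose (c + n)) (t := t)
      (fun n hn => Nat.choose_pos (by omega)) (fun n hn => Nat.choose_pos (by omega))
      (fun n => Nat.choose_succ_mul_choose_le j s (c + n))
    simpa only [add_zero, mul_comm] using this
  · rw [Nat.choose_eq_zero_of_lt (n := j) (by omega), mul_zero]
    exact Nat.zero_le _

theorem Cz_nonneg (n k : ℤ) : 0 ≤ Cz n k := by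
  unfold Cz; split <;> positivity

theorem Cz_natCast (n k : ℕ) : Cz n k = n.choose k := by
  unfold Cz
  split_ifs with h
  · simp
  · rw [Nat.choose_eq_zero_of_lt (by omega), Nat.cast_zero]

theorem Cz_of_neg (n : ℤ) {k : ℤ} (hk : k < 0) : Cz n k = 0 :=
  if_neg fun h => hk.not_ge h.1

theorem minor2_nonneg_X (i i' j j' : ℕ) (hi : i < i') (hj : j < j') :
    0 ≤ Cz j ((i : ℤ) - j) * Cz j' ((i' : ℤ) - j')
        - Cz j' ((i : ℤ) - j') * Cz j ((i' : ℤ) - j) := by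
  rcases lt_or_ge i j' with hij | hji
  · rw [Cz_of_neg (j' : ℤ) (k := (i : ℤ) - j') (by omega), zero_mul, sub_zero]
    exact mul_nonneg (Cz_nonneg _ _) (Cz_nonneg _ _)
  obtain ⟨s, rfl⟩ := Nat.exists_eq_add_of_le hj.le
  obtain ⟨c, rfl⟩ := Nat.exists_eq_add_of_le hji
  obtain ⟨t, rfl⟩ := Nat.exists_eq_add_of_le hi.le
  rw [show ((j + s + c : ℕ) : ℤ) - j = ((s + c : ℕ) : ℤ) by push_cast; ring,
    show ((j + s + c + t : ℕ) : ℤ) - (j + s : ℕ) = ((c + t : ℕ) : ℤ) by push_cast; ring,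
    show ((j + s + c : ℕ) : ℤ) - (j + s : ℕ) = ((c : ℕ) : ℤ) by push_cast; ring,
    show ((j + s + c + t : ℕ) : ℤ) - j = ((s + (c + t) : ℕ) : ℤ) by push_cast; ring]
  simp only [Cz_natCast, sub_nonneg]
  exact_mod_cast Nat.choose_mul_choose_le j s c t
end

section
/- Every 2-by-2 minor of the infinite matrix Y(j,k) = C(k+j, 2j) is nonnegative: for j < j' and k < k', C(k+j,2j)*C(k'+j',2j') - C(k'+j,2j)*C(k+j',2j') ≥ 0. -/
/-!
For fixed `j`, consecutive entries of the row `m ↦ C(m + j, 2j)` have ratio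
`C(m + 1 + j, 2j) / C(m + j, 2j) = (m + 1 + j) / (m + 1 - j)`, which increases with `j`.
Hence the ratio of row `j'` to row `j` is nondecreasing in `m` once both rows are positive
(`m ≥ j'`), which is the minor inequality; for `k < j'` the subtracted term vanishes.
-/

theorem mul_le_mul_of_mul_succ_le {R : Type*} [CommSemiring R] [LinearOrder R]
    [IsStrictOrderedRing R] {f g : ℕ → R} {N : ℕ} (hf : ∀ m, N ≤ m → 0 < f m)
    (hg : ∀ m, N ≤ m → 0 < g m) (hstep : ∀ m, N ≤ m → f (m + 1) * g m ≤ f m * g (m + 1))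
    {k k' : ℕ} (hNk : N ≤ k) (hkk' : k ≤ k') : f k' * g k ≤ f k * g k' := by
  induction k', hkk' using Nat.le_induction with
  | base => rw [mul_comm]
  | succ n hkn ih =>
    have hn : N ≤ n := hNk.trans hkn
    refine le_of_mul_le_mul_left ?_ (mul_pos (hf n hn) (hg n hn))
    calc f n * g n * (f (n + 1) * g k)
        = (f (n + 1) * g n) * (f n * g k) := by ring
      _ ≤ (f n * g (n + 1)) * (f k * g n) :=
          mul_le_mul (hstep n hn) ih (mul_nonneg (hf n hn).le (hg k hNk).le)
            (mul_nonneg (hf n hn).le (hg (n + 1) (hn.trans n.le_succ)).le)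
      _ = f n * g n * (f k * g (n + 1)) := by ring

theorem Nat.choose_two_mul_succ_mul (j m : ℕ) :
    (m + 1 + j).choose (2 * j) * (m + 1 - j) = (m + j).choose (2 * j) * (m + 1 + j) := by
  have h := Nat.choose_mul_succ_eq (m + j) (2 * j)
  rw [show m + j + 1 - 2 * j = m + 1 - j by omega] at h
  rw [show m + 1 + j = m + j + 1 by ring, h]

theorem Nat.choose_two_mul_succ_mul_le {j j' m : ℕ} (hjj' : j ≤ j') (hj'm : j' ≤ m) :
    (m + 1 + j).choose (2 * j) * (m + j').choose (2 * j') ≤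
      (m + j).choose (2 * j) * (m + 1 + j').choose (2 * j') := by
  have hfactor : (m + 1 + j) * (m + 1 - j') ≤ (m + 1 - j) * (m + 1 + j') := by
    zify [show j ≤ m + 1 by omega, show j' ≤ m + 1 by omega]
    nlinarith
  refine Nat.le_of_mul_le_mul_right ?_
    (Nat.mul_pos (show 0 < m + 1 - j by omega) (show 0 < m + 1 - j' by omega))
  calc (m + 1 + j).choose (2 * j) * (m + j').choose (2 * j') * ((m + 1 - j) * (m + 1 - j'))
      = (m + 1 + j).choose (2 * j) * (m + 1 - j) * (m + j').choose (2 * j') *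
          (m + 1 - j') := by ring
    _ = (m + j).choose (2 * j) * (m + j').choose (2 * j') * ((m + 1 + j) * (m + 1 - j')) := by
          rw [Nat.choose_two_mul_succ_mul]; ring
    _ ≤ (m + j).choose (2 * j) * (m + j').choose (2 * j') * ((m + 1 - j) * (m + 1 + j')) :=
          Nat.mul_le_mul_left _ hfactor
    _ = (m + j).choose (2 * j) * (m + 1 - j) * ((m + 1 + j').choose (2 * j') * (m + 1 - j')) := by
          rw [Nat.choose_two_mul_succ_mul]; ring
    _ = (m + j).choose (2 * j) * (m + 1 + j').choose (2 * j') * ((m + 1 - j) * (m + 1 - j')) := by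
          ring

theorem minor2_nonneg_Y (j j' k k' : ℕ) (hj : j < j') (hk : k < k') :
    0 ≤ ((k + j).choose (2 * j) * (k' + j').choose (2 * j') : ℤ)
        - ((k' + j).choose (2 * j) * (k + j').choose (2 * j') : ℤ) := by
  rcases lt_or_ge k j' with hkj' | hj'k
  · rw [Nat.choose_eq_zero_of_lt (by omega : k + j' < 2 * j')]
    simp only [Nat.cast_zero, mul_zero, sub_zero]
    positivity
  · have hminor := mul_le_mul_of_mul_succ_le (N := j')
      (f := fun m => (m + j).choose (2 * j)) (g := fun m => (m + j').choose (2 * j'))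
      (fun m hm => Nat.choose_pos (by omega)) (fun m hm => Nat.choose_pos (by omega))
      (fun m hm => Nat.choose_two_mul_succ_mul_le hj.le hm) hj'k hk.le
    rw [sub_nonneg]
    exact_mod_cast hminor
end

section
/- For all natural numbers n, k with k ≤ n, the polynomial identity holds: (1+s)^(2n+1) * (s/(1+s))^k - s^(2n+1) * ((1+s)/s)^k = sum over j from k to n of (s(s+1))^j * ((2n-2k+1)/(2n-2j+1)) * C(2n-(k+j), 2n-2j); equivalently, multiplying out, (1+s)^(2n+1-k) * s^k - s^(2n+1-k) * (1+s)^k = sum_{j=k}^{n} (s(s+1))^j * ((2n-2k+1)/(2n-2j+1)) * C(2n-k-j, 2n-2j) as polynomials in s. -/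
/-!
Put `m = n - k`, `x = 1 + s`, `y = -s`. Then `x + y = 1`, `-xy = s(s+1)`, and after factoring out
`(s(s+1))^k` the left side is the power sum `x^(2m+1) + y^(2m+1)`. Power sums `V_N = x^N + y^N`
satisfy `V_{N+2} = V_{N+1} - xy V_N`, and so does Waring's expansion
`∑ i, N / (N - i) * C(N - i, i) * (-xy)^i`, by a Pascal-type recurrence for its coefficients.
For odd `N = 2m + 1` the coefficient rewrites as `(2m+1)/(2m-2i+1) * C(2m-i, 2m-2i)`.
-/

open Finset

-- For `N = 0` the junk division gives `0` instead of `V_0 = 2`, hence the hypotheses `N ≠ 0`.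
def lucasCoeff (N i : ℕ) : ℚ := N / (N - i : ℕ) * (N - i).choose i

lemma lucasCoeff_zero_right {N : ℕ} (hN : N ≠ 0) : lucasCoeff N 0 = 1 := by
  simp [lucasCoeff, hN]

lemma lucasCoeff_eq_zero {N i : ℕ} (h : N < 2 * i) : lucasCoeff N i = 0 := by
  simp [lucasCoeff, Nat.choose_eq_zero_of_lt (by omega : N - i < i)]

lemma lucasCoeff_add_two {N i : ℕ} (hi : i < N) :
    lucasCoeff (N + 2) (i + 1) = lucasCoeff (N + 1) (i + 1) + lucasCoeff N i := by
  obtain ⟨p, rfl⟩ : ∃ p, N = i + p + 1 := ⟨N - i - 1, by omega⟩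
  have hpascal := Nat.choose_succ_succ' (p + 1) i
  have habsorb := Nat.add_one_mul_choose_eq (p + 1) i
  simp only [lucasCoeff, show i + p + 1 + 2 - (i + 1) = p + 2 by omega,
    show i + p + 1 + 1 - (i + 1) = p + 1 by omega, show i + p + 1 - i = p + 1 by omega]
  rw [hpascal] at habsorb ⊢
  replace habsorb := congrArg (Nat.cast : ℕ → ℚ) habsorb
  push_cast at habsorb ⊢
  field_simp
  linear_combination habsorb

lemma lucasCoeff_eq_div_mul_choose {N i : ℕ} (h : 2 * i < N) :
    lucasCoeff N i = N / (N - 2 * i : ℕ) * (N - 1 - i).choose i := by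
  obtain ⟨r, rfl⟩ : ∃ r, N = 2 * i + r + 1 := ⟨N - 2 * i - 1, by omega⟩
  have h := Nat.choose_mul_succ_eq (i + r) i
  simp only [lucasCoeff, show 2 * i + r + 1 - i = i + r + 1 by omega,
    show 2 * i + r + 1 - 2 * i = r + 1 by omega, show 2 * i + r + 1 - 1 - i = i + r by omega,
    show i + r + 1 - i = r + 1 by omega] at h ⊢
  replace h := congrArg (Nat.cast : ℕ → ℚ) h
  push_cast at h ⊢
  field_simp
  linear_combination -h

section

variable {K : Type*} [Field K] [CharZero K]

lemma sum_lucasCoeff_add_two {N : ℕ} (hN : N ≠ 0) (t : K) :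
    ∑ i ∈ range (N + 2), (lucasCoeff (N + 2) i : K) * t ^ i
      = ∑ i ∈ range (N + 1), (lucasCoeff (N + 1) i : K) * t ^ i
        + t * ∑ i ∈ range N, (lucasCoeff N i : K) * t ^ i := by
  have hterm : ∀ i ∈ range N, (lucasCoeff (N + 2) (i + 1) : K) * t ^ (i + 1)
      = (lucasCoeff (N + 1) (i + 1) : K) * t ^ (i + 1) + t * ((lucasCoeff N i : K) * t ^ i) := by
    intro i hi
    rw [lucasCoeff_add_two (mem_range.mp hi)]
    push_cast
    ring
  rw [sum_range_succ, lucasCoeff_eq_zero (by omega : N + 2 < 2 * (N + 1)), sum_range_succ',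
    sum_range_succ' _ N, lucasCoeff_zero_right (by omega), lucasCoeff_zero_right (by omega),
    sum_congr rfl hterm, sum_add_distrib, mul_sum]
  push_cast
  ring

theorem pow_add_pow_eq_sum_lucasCoeff {x y : K} (hxy : x + y = 1) {N : ℕ} (hN : N ≠ 0) :
    x ^ N + y ^ N = ∑ i ∈ range N, (lucasCoeff N i : K) * (-(x * y)) ^ i := by
  suffices h : ∀ M, x ^ (M + 1) + y ^ (M + 1)
      = ∑ i ∈ range (M + 1), (lucasCoeff (M + 1) i : K) * (-(x * y)) ^ i
      ∧ x ^ (M + 2) + y ^ (M + 2)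
      = ∑ i ∈ range (M + 2), (lucasCoeff (M + 2) i : K) * (-(x * y)) ^ i by
    obtain ⟨M, rfl⟩ := Nat.exists_eq_succ_of_ne_zero hN
    exact (h M).1
  intro M
  induction M with
  | zero =>
    refine ⟨by simp [lucasCoeff, hxy], ?_⟩
    norm_num [sum_range_succ, lucasCoeff]
    linear_combination (x + y + 1) * hxy
  | succ M ih =>
    refine ⟨ih.2, ?_⟩
    have hrec : x ^ (M + 3) + y ^ (M + 3)
        = (x ^ (M + 2) + y ^ (M + 2)) + -(x * y) * (x ^ (M + 1) + y ^ (M + 1)) := by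
      linear_combination (x ^ (M + 2) + y ^ (M + 2)) * hxy
    rw [hrec, ih.1, ih.2, sum_lucasCoeff_add_two (N := M + 1) (by omega)]

theorem one_add_pow_sub_pow_odd (s : K) (m : ℕ) :
    (1 + s) ^ (2 * m + 1) - s ^ (2 * m + 1)
      = ∑ i ∈ range (m + 1), (s * (s + 1)) ^ i * ((2 * m + 1 : K) / (2 * m - 2 * i + 1))
          * ((2 * m - i).choose (2 * m - 2 * i) : K) := by
  have hlucas := pow_add_pow_eq_sum_lucasCoeff (x := 1 + s) (y := -s) (by ring)
    (N := 2 * m + 1) (by omega)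
  rw [(odd_two_mul_add_one m).neg_pow, ← sub_eq_add_neg, show -((1 + s) * -s) = s * (s + 1) by ring] at hlucas
  rw [hlucas, ← sum_subset (range_subset_range.mpr (by omega : m + 1 ≤ 2 * m + 1))]
  · refine sum_congr rfl fun i hi => ?_
    have him : i ≤ m := mem_range_succ_iff.mp hi
    rw [lucasCoeff_eq_div_mul_choose (by omega),
      Nat.choose_symm_of_eq_add (show 2 * m + 1 - 1 - i = i + (2 * m - 2 * i) by omega),
      show 2 * m + 1 - 1 - i = 2 * m - i by omega]
    push_cast [show 2 * m + 1 - 2 * i = 2 * (m - i) + 1 by omega, Nat.cast_sub him]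
    ring
  · intro i _ hi
    rw [mem_range, not_lt] at hi
    rw [lucasCoeff_eq_zero (by omega), Rat.cast_zero, zero_mul]

end

theorem identity_one_generating (n k : ℕ) (hk : k ≤ n) (s : ℝ) :
    (1 + s) ^ (2 * n + 1 - k) * s ^ k - s ^ (2 * n + 1 - k) * (1 + s) ^ k
      = ∑ j ∈ Finset.Icc k n,
          (s * (s + 1)) ^ j * ((2 * n - 2 * k + 1 : ℝ) / (2 * n - 2 * j + 1))
            * ((2 * n - k - j).choose (2 * n - 2 * j) : ℝ) := by
  obtain ⟨m, rfl⟩ := Nat.exists_eq_add_of_le hk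
  rw [show 2 * (k + m) + 1 - k = k + (2 * m + 1) by omega, ← Ico_add_one_right_eq_Icc,
    sum_Ico_eq_sum_range, show k + m + 1 - k = m + 1 by omega]
  calc _ = (s * (s + 1)) ^ k * ((1 + s) ^ (2 * m + 1) - s ^ (2 * m + 1)) := by
        rw [mul_pow]; ring
    _ = _ := by
      rw [one_add_pow_sub_pow_odd, mul_sum]
      refine sum_congr rfl fun i _ => ?_
      rw [show 2 * (k + m) - k - (k + i) = 2 * m - i by omega,
        show 2 * (k + m) - 2 * (k + i) = 2 * m - 2 * i by omega]
      push_cast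
      ring
end

section
/- For all natural numbers n, k with k ≤ n and all natural numbers i with i ≤ 2n+1: C(2n-k+1, 2n-i+1) - C(k, 2n-i+1) = sum over j from k to n of C(j, i-j) * ((2n-2k+1)/(2n-2j+1)) * C(2n-(k+j), 2n-2j). -/
open Polynomial Finset

theorem Cz_natCast_s6 (a b : ℕ) : Cz a b = a.choose b := by
  unfold Cz
  split_ifs with h
  · simp
  · rw [Nat.choose_eq_zero_of_lt (by omega), Nat.cast_zero]

theorem Cz_of_neg_s6 (a : ℤ) {b : ℤ} (hb : b < 0) : Cz a b = 0 :=
  if_neg (by omega)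

theorem Cz_symm (a b : ℤ) : Cz a (a - b) = Cz a b := by
  unfold Cz
  by_cases h : 0 ≤ b ∧ b ≤ a
  · obtain ⟨x, rfl⟩ := Int.eq_ofNat_of_zero_le h.1
    obtain ⟨y, hy⟩ := Int.eq_ofNat_of_zero_le (sub_nonneg.2 h.2)
    rw [if_pos (by omega), if_pos h, hy, Int.toNat_natCast, Int.toNat_natCast,
      show a.toNat = y + x by omega, Nat.choose_symm_add]
  · rw [if_neg h, if_neg (by omega)]

theorem coeff_X_pow_mul_X_add_one_pow {R : Type*} [Ring R] (a b i : ℕ) :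
    ((X ^ a * (X + 1) ^ b : R[X]).coeff i) = Cz b (i - a) := by
  rw [coeff_X_pow_mul', coeff_X_add_one_pow]
  split_ifs with h
  · rw [show (i : ℤ) - a = ((i - a : ℕ) : ℤ) by omega, Cz_natCast_s6, Int.cast_natCast]
  · rw [Cz_of_neg_s6 _ (by omega), Int.cast_zero]

theorem coeff_X_mul_X_add_one_pow {R : Type*} [CommRing R] (j i : ℕ) :
    (((X * (X + 1)) ^ j : R[X]).coeff i) = Cz j (i - j) := by
  rw [mul_pow, coeff_X_pow_mul_X_add_one_pow]

noncomputable def fibPoly : ℕ → ℤ[X]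
  | 0 => 0
  | 1 => 1
  | n + 2 => fibPoly (n + 1) + X * fibPoly n

theorem coeff_fibPoly_succ : ∀ n d : ℕ, (fibPoly (n + 1)).coeff d = (n - d).choose d
  | 0, d => by
    rcases d with _ | d <;> simp [fibPoly, coeff_one]
  | 1, d => by
    rcases d with _ | _ | d <;> simp [fibPoly, coeff_one]
  | n + 2, 0 => by simp [fibPoly, coeff_fibPoly_succ n 0]
  | n + 2, d + 1 => by
    rw [fibPoly, coeff_add, coeff_X_mul, coeff_fibPoly_succ (n + 1) (d + 1),
      coeff_fibPoly_succ n d, Nat.add_sub_add_right, show n + 2 - (d + 1) = n + 1 - d by omega]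
    rcases le_or_gt d n with hd | hd
    · rw [Nat.sub_add_comm hd, Nat.choose_succ_succ', Nat.cast_add, add_comm]
    · rw [Nat.sub_eq_zero_of_le hd, Nat.sub_eq_zero_of_le hd.le,
        Nat.choose_eq_zero_of_lt (by omega), Nat.choose_eq_zero_of_lt (by omega)]
      simp

theorem pow_eq_aeval_fibPoly {R : Type*} [CommRing R] {a u : R} (h : a ^ 2 = a + u) (n : ℕ) :
    a ^ n = aeval u (fibPoly (n + 1)) + (a - 1) * aeval u (fibPoly n) := by
  induction n with
  | zero => simp [fibPoly]
  | succ n ih =>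
    rw [pow_succ, ih, fibPoly]
    simp only [map_add, map_mul, aeval_X]
    linear_combination (aeval u (fibPoly n)) * h

noncomputable def lucasPoly (n : ℕ) : ℤ[X] := 2 * fibPoly (n + 1) - fibPoly n

theorem pow_add_pow_eq_aeval_lucasPoly {R : Type*} [CommRing R] {a b : R} (hab : a + b = 1)
    (n : ℕ) : a ^ n + b ^ n = aeval (-(a * b)) (lucasPoly n) := by
  rw [pow_eq_aeval_fibPoly (u := -(a * b)) (by linear_combination a * hab) n,
    pow_eq_aeval_fibPoly (u := -(a * b)) (by linear_combination b * hab) n, lucasPoly]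
  simp only [map_sub, map_mul, map_ofNat]
  linear_combination (aeval (-(a * b)) (fibPoly n)) * hab

theorem coeff_lucasPoly_succ (n d : ℕ) :
    (lucasPoly (n + 1)).coeff d = 2 * ((n + 1 - d).choose d : ℤ) - (n - d).choose d := by
  rw [lucasPoly, coeff_sub, coeff_ofNat_mul, coeff_fibPoly_succ, coeff_fibPoly_succ]

theorem coeff_lucasPoly_two_mul_add_one_of_lt {m d : ℕ} (hd : m < d) :
    (lucasPoly (2 * m + 1)).coeff d = 0 := by
  rw [coeff_lucasPoly_succ, Nat.choose_eq_zero_of_lt (by omega),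
    Nat.choose_eq_zero_of_lt (by omega)]
  simp

theorem coeff_lucasPoly_two_mul_add_one {m d : ℕ} (hd : d ≤ m) :
    ((lucasPoly (2 * m + 1)).coeff d : ℚ)
      = (2 * m + 1) / (2 * m - 2 * d + 1) * (Cz (2 * m - d) (2 * m - 2 * d) : ℚ) := by
  have hsucc : (2 * m - d).choose d * (2 * m + 1 - d)
      = (2 * m + 1 - d).choose d * (2 * (m - d) + 1) := by
    have h := Nat.choose_mul_succ_eq (2 * m - d) d
    rwa [show 2 * m - d + 1 = 2 * m + 1 - d by omega,
      show 2 * m + 1 - d - d = 2 * (m - d) + 1 by omega] at h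
  have hsuccQ : ((2 * m - d).choose d : ℚ) * (2 * m + 1 - d)
      = ((2 * m + 1 - d).choose d : ℚ) * (2 * (m - d) + 1) := by
    have h := congrArg (Nat.cast : ℕ → ℚ) hsucc
    push_cast [Nat.cast_sub hd, Nat.cast_sub (show d ≤ 2 * m + 1 by omega)] at h
    exact h
  have hpos : (2 * m - 2 * d + 1 : ℚ) ≠ 0 := by
    have : (d : ℚ) ≤ m := by exact_mod_cast hd
    linarith
  rw [show (2 * m - 2 * d : ℤ) = (2 * m - d) - d by ring, Cz_symm,
    show (2 * m - d : ℤ) = ((2 * m - d : ℕ) : ℤ) by omega, Cz_natCast_s6, coeff_lucasPoly_succ,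
    div_mul_eq_mul_div, eq_div_iff hpos]
  push_cast
  linear_combination (-2) * hsuccQ

theorem X_add_one_pow_sub_X_pow (m : ℕ) :
    ((X + 1) ^ (2 * m + 1) - X ^ (2 * m + 1) : ℚ[X])
      = ∑ d ∈ range (m + 1), (lucasPoly (2 * m + 1)).coeff d • (X * (X + 1)) ^ d := by
  have hdeg : (lucasPoly (2 * m + 1)).natDegree < m + 1 :=
    Nat.lt_succ_of_le <| natDegree_le_iff_coeff_eq_zero.2 fun _ =>
      coeff_lucasPoly_two_mul_add_one_of_lt
  have h := pow_add_pow_eq_aeval_lucasPoly (a := (X + 1 : ℚ[X])) (b := -X) (by ring) (2 * m + 1)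
  rw [Odd.neg_pow ⟨m, rfl⟩, ← sub_eq_add_neg,
    show -((X + 1) * -X) = (X * (X + 1) : ℚ[X]) by ring] at h
  rw [h, aeval_eq_sum_range' hdeg]

theorem Cz_sub_Cz_eq_sum_coeff_lucasPoly_mul (k m i : ℕ) :
    ((Cz (k + (2 * m + 1) : ℕ) (i - k) : ℚ) - (Cz k (i - (k + (2 * m + 1) : ℕ)) : ℚ))
      = ∑ d ∈ range (m + 1),
          ((lucasPoly (2 * m + 1)).coeff d : ℚ)
            * (Cz (k + d : ℕ) (i - (k + d : ℕ)) : ℚ) := by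
  have h := congrArg (fun p => ((X * (X + 1)) ^ k * p).coeff i) (X_add_one_pow_sub_X_pow m)
  simp only [mul_sub, mul_sum, mul_smul_comm, ← pow_add, coeff_sub, finsetSum_coeff, coeff_smul,
    coeff_X_mul_X_add_one_pow] at h
  rw [show (X * (X + 1)) ^ k * (X + 1) ^ (2 * m + 1)
        = (X ^ k * (X + 1) ^ (k + (2 * m + 1)) : ℚ[X]) by rw [mul_pow, pow_add]; ring,
    show (X * (X + 1)) ^ k * X ^ (2 * m + 1)
        = (X ^ (k + (2 * m + 1)) * (X + 1) ^ k : ℚ[X]) by rw [mul_pow, pow_add]; ring,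
    coeff_X_pow_mul_X_add_one_pow, coeff_X_pow_mul_X_add_one_pow] at h
  simpa only [zsmul_eq_mul] using h

theorem identity_one_general (n k i : ℕ) (hk : k ≤ n) :
    ((Cz (2 * (n : ℤ) - k + 1) (2 * (n : ℤ) - i + 1) : ℚ)
        - (Cz (k : ℤ) (2 * (n : ℤ) - i + 1) : ℚ))
      = ∑ j ∈ Finset.Icc k n,
          (Cz (j : ℤ) ((i : ℤ) - j) : ℚ)
            * ((2 * (n : ℚ) - 2 * k + 1) / (2 * (n : ℚ) - 2 * j + 1))
            * (Cz (2 * (n : ℤ) - ((k : ℤ) + j)) (2 * (n : ℤ) - 2 * j) : ℚ) := by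
  obtain ⟨m, rfl⟩ := Nat.exists_eq_add_of_le hk
  rw [← Cz_symm, ← Cz_symm (k : ℤ),
    show 2 * ((k + m : ℕ) : ℤ) - k + 1 = (k + (2 * m + 1) : ℕ) by push_cast; ring,
    show ((k + (2 * m + 1) : ℕ) : ℤ) - (2 * ((k + m : ℕ) : ℤ) - i + 1) = i - k by
      push_cast; ring,
    show (k : ℤ) - (2 * ((k + m : ℕ) : ℤ) - i + 1) = i - (k + (2 * m + 1) : ℕ) by
      push_cast; ring,
    Cz_sub_Cz_eq_sum_coeff_lucasPoly_mul, ← Ico_add_one_right_eq_Icc, sum_Ico_eq_sum_range,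
    show k + m + 1 - k = m + 1 by omega]
  refine sum_congr rfl fun d hd => ?_
  rw [coeff_lucasPoly_two_mul_add_one (Nat.lt_succ_iff.1 (mem_range.1 hd))]
  push_cast
  rw [show 2 * ((k : ℤ) + m) - (k + (k + d)) = 2 * m - d by ring,
    show 2 * ((k : ℤ) + m) - 2 * (k + d) = 2 * m - 2 * d by ring,
    show 2 * ((k : ℚ) + m) - 2 * k + 1 = 2 * m + 1 by ring,
    show 2 * ((k : ℚ) + m) - 2 * (k + d) + 1 = 2 * m - 2 * d + 1 by ring]
  ring

theorem identity_one (n k i : ℕ) (hk : k ≤ n) (hi : i ≤ 2 * n + 1) :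
    ((Cz (2 * (n : ℤ) - k + 1) (2 * (n : ℤ) - i + 1) : ℚ)
        - (Cz (k : ℤ) (2 * (n : ℤ) - i + 1) : ℚ))
      = ∑ j ∈ Finset.Icc k n,
          (Cz (j : ℤ) ((i : ℤ) - j) : ℚ)
            * ((2 * (n : ℚ) - 2 * k + 1) / (2 * (n : ℚ) - 2 * j + 1))
            * (Cz (2 * (n : ℤ) - ((k : ℤ) + j)) (2 * (n : ℤ) - 2 * j) : ℚ) :=
  identity_one_general n k i hk
end
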